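/- arXiv:2303.11481 — 2 statements merged into one kernel-verified Lean document; each statement's English description precedes it below -/
import Mathlib

section
/- Let O be a subring of the real quaternions ℍ that is closed under quaternion conjugation (q ∈ O implies q̄ ∈ O). Then the set SL₂(O) of 2×2 matrices over ℍ with all four entries in O and Dieudonné determinant equal to 1 is a subgroup of the group of invertible 2×2 quaternionic matrices: it contains the identity matrix, it is closed under matrix multiplication, and every γ ∈ SL₂(O) has a two-sided inverse all of whose entries again lie in O and whose Dieudonné determinant is 1. -/
/-!
Via the embedding `ℍ ↪ M₂(ℂ)`, a quaternionic `2 × 2` matrix becomes a complex `4 × 4` matrix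
whose determinant (the Study determinant) is exactly `det_H(γ)²`; hence `det_H` is multiplicative.
For the inverse, the matrix `adjH γ` built from conjugates and norms of the entries of `γ`
satisfies `γ * adjH γ = det_H(γ)² • 1`. Its entries lie in `𝒪` because `𝒪` is closed under
conjugation and contains `|q|² = q q̄`, and once `γ * adjH γ = 1` and `det_H (adjH γ) = 1`,
`adjH γ` also has a right inverse, so it is a two-sided inverse of `γ`.
-/

open Quaternion

/-- The Dieudonné determinant of a `2 × 2` quaternionic matrix `[[a,b],[c,d]]`:
`det_H γ = sqrt(|a|²|d|² + |c|²|b|² − 2 Re(c ā b d̄))`. -/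
noncomputable def detH (γ : Matrix (Fin 2) (Fin 2) ℍ) : ℝ :=
  Real.sqrt (normSq (γ 0 0) * normSq (γ 1 1) + normSq (γ 1 0) * normSq (γ 0 1)
    - 2 * (γ 1 0 * star (γ 0 0) * γ 0 1 * star (γ 1 1)).re)

open Matrix

namespace Quaternion

/-- Writing `q = z + w j` with `z = re + imI i` and `w = imJ + imK i`, left multiplication by `q`
on `ℂ ⊕ ℂ j` has matrix `[[z, w], [-w̄, z̄]]`. -/
def toMatrixComplex : ℍ →+* Matrix (Fin 2) (Fin 2) ℂ where
  toFun q := !![⟨q.re, q.imI⟩, ⟨q.imJ, q.imK⟩; ⟨-q.imJ, q.imK⟩, ⟨q.re, -q.imI⟩]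
  map_one' := by ext i j; fin_cases i <;> fin_cases j <;> apply Complex.ext <;> simp
  map_mul' p q := by
    ext i j; fin_cases i <;> fin_cases j <;> apply Complex.ext <;>
      simp only [mul_apply, Fin.sum_univ_two, of_apply, cons_val', cons_val_zero, cons_val_one,
        cons_val_fin_one, Complex.mul_re, Complex.mul_im, Complex.add_re, Complex.add_im, re_mul,
        imI_mul, imJ_mul, imK_mul, Fin.zero_eta, Fin.mk_one, Fin.isValue] <;>
      ring
  map_zero' := by ext i j; fin_cases i <;> fin_cases j <;> apply Complex.ext <;> simp
  map_add' p q := by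
    ext i j; fin_cases i <;> fin_cases j <;> apply Complex.ext <;>
      simp only [Matrix.add_apply, of_apply, cons_val', cons_val_zero, cons_val_one,
        cons_val_fin_one, Complex.add_re, Complex.add_im, re_add, imI_add, imJ_add, imK_add,
        Fin.zero_eta, Fin.mk_one, Fin.isValue, neg_add]

theorem toMatrixComplex_apply (q : ℍ) :
    toMatrixComplex q = !![⟨q.re, q.imI⟩, ⟨q.imJ, q.imK⟩; ⟨-q.imJ, q.imK⟩, ⟨q.re, -q.imI⟩] := rfl

end Quaternion

noncomputable def studyRep :
    Matrix (Fin 2) (Fin 2) ℍ →+* Matrix (Fin 2 × Fin 2) (Fin 2 × Fin 2) ℂ :=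
  (compRingEquiv (Fin 2) (Fin 2) ℂ).toRingHom.comp toMatrixComplex.mapMatrix

theorem studyRep_apply (γ : Matrix (Fin 2) (Fin 2) ℍ) (i j : Fin 2 × Fin 2) :
    studyRep γ i j = toMatrixComplex (γ i.1 j.1) i.2 j.2 := rfl

noncomputable def detHSq (γ : Matrix (Fin 2) (Fin 2) ℍ) : ℝ :=
  normSq (γ 0 0) * normSq (γ 1 1) + normSq (γ 1 0) * normSq (γ 0 1)
    - 2 * (γ 1 0 * star (γ 0 0) * γ 0 1 * star (γ 1 1)).re

theorem detH_eq_one_iff {γ : Matrix (Fin 2) (Fin 2) ℍ} : detH γ = 1 ↔ detHSq γ = 1 :=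
  Real.sqrt_eq_one

set_option maxRecDepth 10000 in
theorem det_studyRep (γ : Matrix (Fin 2) (Fin 2) ℍ) : (studyRep γ).det = detHSq γ := by
  rw [← det_reindex_self finProdFinEquiv]
  simp only [det_succ_row_zero, Fin.sum_univ_succ, det_unique, Fin.default_eq_zero,
    Finset.univ_unique, Finset.sum_singleton, submatrix_apply, reindex_apply, Equiv.symm_mk,
    Equiv.coe_fn_mk, finProdFinEquiv, Fin.divNat, Fin.modNat, Fin.succAbove, studyRep_apply,
    toMatrixComplex_apply, of_apply, cons_val_zero, cons_val_one, Fin.coe_ofNat_eq_mod,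
    Nat.zero_mod, Fin.zero_eta, Fin.mk_one, Nat.reduceMul, Nat.reduceAdd, Nat.reduceDiv,
    Nat.reduceMod, Fin.reduceSucc, Fin.reduceCastSucc, Fin.reduceLT, ↓reduceIte]
  apply Complex.ext <;>
    simp only [Complex.mul_re, Complex.mul_im, Complex.add_re, Complex.add_im, Complex.neg_re,
      Complex.neg_im, Complex.one_re, Complex.one_im, Complex.ofReal_re, Complex.ofReal_im,
      pow_succ, pow_zero, detHSq, normSq_def', re_mul, imI_mul, imJ_mul, imK_mul, re_star,
      imI_star, imJ_star, imK_star] <;>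
    ring

theorem detHSq_mul (γ δ : Matrix (Fin 2) (Fin 2) ℍ) :
    detHSq (γ * δ) = detHSq γ * detHSq δ := by
  have h := congrArg det (map_mul studyRep γ δ)
  rw [det_mul, det_studyRep, det_studyRep, det_studyRep] at h
  exact_mod_cast h

theorem detHSq_one : detHSq 1 = 1 := by simp [detHSq]

noncomputable def adjH (γ : Matrix (Fin 2) (Fin 2) ℍ) : Matrix (Fin 2) (Fin 2) ℍ :=
  !![star (γ 0 0) * normSq (γ 1 1) - star (γ 1 0) * γ 1 1 * star (γ 0 1),
     star (γ 1 0) * normSq (γ 0 1) - star (γ 0 0) * γ 0 1 * star (γ 1 1);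
     star (γ 0 1) * normSq (γ 1 0) - star (γ 1 1) * γ 1 0 * star (γ 0 0),
     star (γ 1 1) * normSq (γ 0 0) - star (γ 0 1) * γ 0 0 * star (γ 1 0)]

theorem mul_adjH (γ : Matrix (Fin 2) (Fin 2) ℍ) : γ * adjH γ = detHSq γ • 1 := by
  ext i j : 1
  fin_cases i <;> fin_cases j <;> ext <;>
    simp only [adjH, mul_apply, Fin.sum_univ_two, of_apply, cons_val_zero, cons_val_one,
      Fin.zero_eta, Fin.mk_one, Matrix.smul_apply, one_apply_eq, one_apply_ne zero_ne_one,
      one_apply_ne one_ne_zero, detHSq, normSq_def', re_mul, imI_mul, imJ_mul, imK_mul, re_add,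
      imI_add, imJ_add, imK_add, re_sub, imI_sub, imJ_sub, imK_sub, re_star, imI_star, imJ_star,
      imK_star, re_coe, imI_coe, imJ_coe, imK_coe, re_smul, imI_smul, imJ_smul, imK_smul, re_one,
      imI_one, imJ_one, imK_one, re_zero, imI_zero, imJ_zero, imK_zero] <;>
    ring

section Unimodular

variable {γ : Matrix (Fin 2) (Fin 2) ℍ} (hγ : detHSq γ = 1)
include hγ

theorem mul_adjH_of_detHSq_eq_one : γ * adjH γ = 1 := by
  rw [mul_adjH, hγ, one_smul]

theorem detHSq_adjH_of_detHSq_eq_one : detHSq (adjH γ) = 1 := by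
  have h := detHSq_mul γ (adjH γ)
  rwa [mul_adjH_of_detHSq_eq_one hγ, detHSq_one, hγ, one_mul, eq_comm] at h

theorem adjH_mul_of_detHSq_eq_one : adjH γ * γ = 1 := by
  have hδ := detHSq_adjH_of_detHSq_eq_one hγ
  have hγ_eq : γ = adjH (adjH γ) :=
    left_inv_eq_right_inv (mul_adjH_of_detHSq_eq_one hγ) (mul_adjH_of_detHSq_eq_one hδ)
  calc adjH γ * γ = adjH γ * adjH (adjH γ) := congrArg (adjH γ * ·) hγ_eq
    _ = 1 := mul_adjH_of_detHSq_eq_one hδ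

end Unimodular

theorem adjH_apply_mem {O : Subring ℍ} (hstar : ∀ q ∈ O, star q ∈ O)
    {γ : Matrix (Fin 2) (Fin 2) ℍ} (hγ : ∀ i j, γ i j ∈ O) (i j : Fin 2) : adjH γ i j ∈ O := by
  have hnormSq : ∀ q ∈ O, ((normSq q : ℝ) : ℍ) ∈ O := fun q hq ↦
    self_mul_star q ▸ mul_mem hq (hstar q hq)
  fin_cases i <;> fin_cases j <;> simp only [adjH] <;>
    apply_rules [sub_mem, mul_mem, hstar, hnormSq, hγ]

def SL2 (O : Subring ℍ) : Set (Matrix (Fin 2) (Fin 2) ℍ) :=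
  {γ | (∀ i j, γ i j ∈ O) ∧ detH γ = 1}

theorem one_mem_SL2 (O : Subring ℍ) : 1 ∈ SL2 O := by
  refine ⟨fun i j ↦ ?_, detH_eq_one_iff.mpr detHSq_one⟩
  rw [one_apply]
  split_ifs
  exacts [one_mem O, zero_mem O]

theorem mul_mem_SL2 {O : Subring ℍ} {γ δ : Matrix (Fin 2) (Fin 2) ℍ} (hγ : γ ∈ SL2 O)
    (hδ : δ ∈ SL2 O) : γ * δ ∈ SL2 O := by
  refine ⟨fun i j ↦ ?_, ?_⟩
  · rw [mul_apply]
    exact sum_mem fun k _ ↦ mul_mem (hγ.1 i k) (hδ.1 k j)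
  · rw [detH_eq_one_iff, detHSq_mul, detH_eq_one_iff.mp hγ.2, detH_eq_one_iff.mp hδ.2, one_mul]

theorem adjH_mem_SL2 {O : Subring ℍ} (hstar : ∀ q ∈ O, star q ∈ O)
    {γ : Matrix (Fin 2) (Fin 2) ℍ} (hγ : γ ∈ SL2 O) : adjH γ ∈ SL2 O :=
  ⟨adjH_apply_mem hstar hγ.1,
    detH_eq_one_iff.mpr (detHSq_adjH_of_detHSq_eq_one (detH_eq_one_iff.mp hγ.2))⟩

/-- For a conjugation-closed subring `O` of the quaternions,
`SL₂(O)` (matrices with entries in `O` and Dieudonné determinant `1`) is a group: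
it contains the identity, is closed under multiplication, and every element has a
two-sided inverse lying again in `SL₂(O)`. -/
theorem sl2_order_is_group (O : Subring ℍ) (hstar : ∀ q ∈ O, star q ∈ O) :
    let S : Set (Matrix (Fin 2) (Fin 2) ℍ) :=
      {γ | (∀ i j, γ i j ∈ O) ∧ detH γ = 1}
    (1 : Matrix (Fin 2) (Fin 2) ℍ) ∈ S ∧
    (∀ γ ∈ S, ∀ δ ∈ S, γ * δ ∈ S) ∧
    (∀ γ ∈ S, ∃ δ ∈ S, γ * δ = 1 ∧ δ * γ = 1) := by
  intro S
  refine ⟨one_mem_SL2 O, fun γ hγ δ hδ ↦ mul_mem_SL2 hγ hδ, fun γ hγ ↦ ?_⟩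
  have hD : detHSq γ = 1 := detH_eq_one_iff.mp hγ.2
  exact ⟨adjH γ, adjH_mem_SL2 hstar hγ, mul_adjH_of_detHSq_eq_one hD,
    adjH_mul_of_detHSq_eq_one hD⟩
end

section
/- Let n > 1 be a squarefree integer, K = ℚ(√n), 𝒪_K its ring of integers, and let σ₁, σ₂ : K → ℝ be the two distinct real embeddings of K. Consider the map Φ from the set {q ∈ Quaternion K : all four coordinates of q lie in 𝒪_K} to ℍ × ℍ which sends q to the pair of real quaternions obtained by applying σ₁, respectively σ₂, to each of the four coordinates of q. Then Φ is an injective additive group homomorphism whose image is a discrete additive subgroup of ℍ × ℍ. -/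
/-!
Every element of `K = ℚ(θ)` is `x + yθ` with `x, y ∈ ℚ`, and two distinct embeddings differ by
`θ ↦ -θ`, so `σ₁ c · σ₂ c = x² - n y²` is rational. For an algebraic integer `c` it is therefore
an integer, nonzero unless `c = 0`, so `|σ₁ c| < 1` and `|σ₂ c| < 1` force `c = 0`. Applied to the
coordinates of the difference of two integral quaternions whose images are at distance `< 1`,
this gives discreteness; injectivity is that of `σ₁`.
-/

open Quaternion

theorem exists_eq_algebraMap_add_algebraMap_mul_of_mem_adjoin {R A : Type*} [CommRing R]
    [CommRing A] [Algebra R A] {θ : A} {r : R} (hθ : θ ^ 2 = algebraMap R A r) {a : A}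
    (ha : a ∈ Algebra.adjoin R {θ}) :
    ∃ x y : R, a = algebraMap R A x + algebraMap R A y * θ := by
  induction ha using Algebra.adjoin_induction with
  | mem z hz => rcases hz with rfl; exact ⟨0, 1, by simp⟩
  | algebraMap x => exact ⟨x, 0, by simp⟩
  | add u v _ _ ihu ihv =>
    obtain ⟨x₁, y₁, rfl⟩ := ihu
    obtain ⟨x₂, y₂, rfl⟩ := ihv
    exact ⟨x₁ + x₂, y₁ + y₂, by simp only [map_add]; ring⟩
  | mul u v _ _ ihu ihv =>
    obtain ⟨x₁, y₁, rfl⟩ := ihu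
    obtain ⟨x₂, y₂, rfl⟩ := ihv
    refine ⟨x₁ * x₂ + r * y₁ * y₂, x₁ * y₂ + x₂ * y₁, ?_⟩
    simp only [map_add, map_mul, ← hθ]
    ring

namespace Quaternion

def mapAddMonoidHom {R S : Type*} [CommRing R] [CommRing S] (σ : R →+* S) : ℍ[R] →+ ℍ[S] where
  toFun q := ⟨σ q.re, σ q.imI, σ q.imJ, σ q.imK⟩
  map_zero' := by ext <;> simp
  map_add' p q := by ext <;> exact map_add σ _ _

theorem mapAddMonoidHom_injective {R S : Type*} [CommRing R] [CommRing S] {σ : R →+* S}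
    (hσ : Function.Injective σ) : Function.Injective (mapAddMonoidHom σ) := by
  intro p q h
  ext
  exacts [hσ (congrArg (·.re) h), hσ (congrArg (·.imI) h), hσ (congrArg (·.imJ) h),
    hσ (congrArg (·.imK) h)]

theorem abs_coords_le_norm (z : ℍ) :
    |z.re| ≤ ‖z‖ ∧ |z.imI| ≤ ‖z‖ ∧ |z.imJ| ≤ ‖z‖ ∧ |z.imK| ≤ ‖z‖ := by
  have h i := (PiLp.norm_apply_le (WithLp.toLp 2 (equivTuple ℝ z)) i).trans_eq
    (norm_toLp_equivTuple z)
  exact ⟨by simpa using h 0, by simpa using h 1, by simpa using h 2, by simpa using h 3⟩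

end Quaternion

section QuadraticField

variable {K L : Type*} [Field K] [Algebra ℚ K] [Field L] [Algebra ℚ L] {θ : K} {r : ℚ}

theorem RingHom.apply_eq_neg_apply_of_ne (hθ : θ ^ 2 = algebraMap ℚ K r)
    (hadj : Algebra.adjoin ℚ {θ} = ⊤) {σ₁ σ₂ : K →+* L} (hσ : σ₁ ≠ σ₂) :
    σ₂ θ = -σ₁ θ := by
  have hsq : σ₂ θ ^ 2 = σ₁ θ ^ 2 := by
    simp only [← map_pow, hθ, RingHom.map_rat_algebraMap]
  refine (sq_eq_sq_iff_eq_or_eq_neg.mp hsq).resolve_left fun h => hσ ?_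
  have hext : σ₁.toRatAlgHom = σ₂.toRatAlgHom :=
    AlgHom.ext_of_adjoin_eq_top hadj fun x hx => by rw [Set.mem_singleton_iff.mp hx]; exact h.symm
  exact RingHom.ext fun a => DFunLike.congr_fun hext a

theorem RingHom.exists_apply_mul_apply_eq_algebraMap_of_ne (hθ : θ ^ 2 = algebraMap ℚ K r)
    (hadj : Algebra.adjoin ℚ {θ} = ⊤) {σ₁ σ₂ : K →+* L} (hσ : σ₁ ≠ σ₂) (c : K) :
    ∃ q : ℚ, σ₁ c * σ₂ c = algebraMap ℚ L q := by
  obtain ⟨x, y, rfl⟩ :=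
    exists_eq_algebraMap_add_algebraMap_mul_of_mem_adjoin hθ (hadj ▸ Algebra.mem_top (x := c))
  refine ⟨x ^ 2 - r * y ^ 2, ?_⟩
  have hθ₁ : σ₁ θ ^ 2 = algebraMap ℚ L r := by
    rw [← map_pow, hθ, RingHom.map_rat_algebraMap]
  simp only [map_add, map_mul, RingHom.map_rat_algebraMap,
    RingHom.apply_eq_neg_apply_of_ne hθ hadj hσ, map_sub, map_pow, ← hθ₁]
  ring

theorem exists_int_eq_of_isIntegral_algebraMap {q : ℚ} (h : IsIntegral ℤ (algebraMap ℚ L q)) :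
    ∃ m : ℤ, q = m := by
  obtain ⟨m, hm⟩ := IsIntegrallyClosed.isIntegral_iff.mp
    ((isIntegral_algebraMap_iff (algebraMap ℚ L).injective).mp h)
  exact ⟨m, by rw [← hm]; rfl⟩

theorem one_le_abs_mul_of_isIntegral (hθ : θ ^ 2 = algebraMap ℚ K r)
    (hadj : Algebra.adjoin ℚ {θ} = ⊤) {σ₁ σ₂ : K →+* ℝ} (hσ : σ₁ ≠ σ₂) {c : K}
    (hc : IsIntegral ℤ c) (hc₀ : c ≠ 0) : 1 ≤ |σ₁ c * σ₂ c| := by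
  obtain ⟨q, hq⟩ := RingHom.exists_apply_mul_apply_eq_algebraMap_of_ne hθ hadj hσ c
  obtain ⟨m, rfl⟩ := exists_int_eq_of_isIntegral_algebraMap (L := ℝ)
    (hq ▸ (hc.map σ₁.toIntAlgHom).mul (hc.map σ₂.toIntAlgHom))
  have hm : m ≠ 0 := by
    rintro rfl
    simp only [Int.cast_zero, map_zero, mul_eq_zero, map_eq_zero] at hq
    exact hq.elim hc₀ hc₀
  rw [hq, map_intCast]
  exact_mod_cast Int.one_le_abs hm

theorem eq_zero_of_isIntegral_of_abs_lt_one (hθ : θ ^ 2 = algebraMap ℚ K r)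
    (hadj : Algebra.adjoin ℚ {θ} = ⊤) {σ₁ σ₂ : K →+* ℝ} (hσ : σ₁ ≠ σ₂) {c : K}
    (hc : IsIntegral ℤ c) (hc₁ : |σ₁ c| < 1) (hc₂ : |σ₂ c| < 1) : c = 0 := by
  by_contra hc₀
  refine (one_le_abs_mul_of_isIntegral hθ hadj hσ hc hc₀).not_gt ?_
  rw [abs_mul]
  exact mul_lt_one_of_nonneg_of_lt_one_left (abs_nonneg _) hc₁ hc₂.le

theorem Quaternion.eq_zero_of_norm_mapAddMonoidHom_lt_one (hθ : θ ^ 2 = algebraMap ℚ K r)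
    (hadj : Algebra.adjoin ℚ {θ} = ⊤) {σ₁ σ₂ : K →+* ℝ} (hσ : σ₁ ≠ σ₂) {q : ℍ[K]}
    (hq : IsIntegral ℤ q.re ∧ IsIntegral ℤ q.imI ∧ IsIntegral ℤ q.imJ ∧ IsIntegral ℤ q.imK)
    (h₁ : ‖mapAddMonoidHom σ₁ q‖ < 1) (h₂ : ‖mapAddMonoidHom σ₂ q‖ < 1) : q = 0 := by
  have hcoord := fun c => eq_zero_of_isIntegral_of_abs_lt_one (c := c) hθ hadj hσ
  obtain ⟨re₁, imI₁, imJ₁, imK₁⟩ := abs_coords_le_norm (mapAddMonoidHom σ₁ q)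
  obtain ⟨re₂, imI₂, imJ₂, imK₂⟩ := abs_coords_le_norm (mapAddMonoidHom σ₂ q)
  ext
  exacts [hcoord _ hq.1 (re₁.trans_lt h₁) (re₂.trans_lt h₂),
    hcoord _ hq.2.1 (imI₁.trans_lt h₁) (imI₂.trans_lt h₂),
    hcoord _ hq.2.2.1 (imJ₁.trans_lt h₁) (imJ₂.trans_lt h₂),
    hcoord _ hq.2.2.2 (imK₁.trans_lt h₁) (imK₂.trans_lt h₂)]

end QuadraticField

theorem order_galois_twist_discrete_embedding_general
    (n : ℕ)
    (K : Type) [Field K] [Algebra ℚ K]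
    (θ : K) (hθ : θ ^ 2 = (n : K)) (hadj : Algebra.adjoin ℚ {θ} = ⊤)
    (σ₁ σ₂ : K →+* ℝ) (hσ : σ₁ ≠ σ₂) :
    let O : Set (Quaternion K) :=
      {q | IsIntegral ℤ q.re ∧ IsIntegral ℤ q.imI ∧
        IsIntegral ℤ q.imJ ∧ IsIntegral ℤ q.imK}
    let Φ : Quaternion K → ℍ × ℍ := fun q =>
      ((⟨σ₁ q.re, σ₁ q.imI, σ₁ q.imJ, σ₁ q.imK⟩ : ℍ),
       (⟨σ₂ q.re, σ₂ q.imI, σ₂ q.imJ, σ₂ q.imK⟩ : ℍ))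
    (∀ p q : Quaternion K, Φ (p + q) = Φ p + Φ q) ∧
    Set.InjOn Φ O ∧
    (∀ x ∈ Φ '' O, ∃ ε > 0, ∀ y ∈ Φ '' O, dist x y < ε → y = x) := by
  intro O Φ
  have hΦ : Φ = (mapAddMonoidHom σ₁).prod (mapAddMonoidHom σ₂) := rfl
  have hθ' : θ ^ 2 = algebraMap ℚ K n := by rw [hθ, map_natCast]
  refine ⟨by simp only [hΦ, map_add, implies_true], fun p _ q _ h => ?_, ?_⟩
  · exact mapAddMonoidHom_injective σ₁.injective (congrArg Prod.fst h)
  rintro _ ⟨q₀, hq₀, rfl⟩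
  refine ⟨1, one_pos, ?_⟩
  rintro _ ⟨q₁, hq₁, rfl⟩ hdist
  rw [hΦ, Prod.dist_eq, max_lt_iff] at hdist
  simp only [AddMonoidHom.prod_apply, dist_eq_norm, ← map_sub] at hdist
  have hsub := eq_zero_of_norm_mapAddMonoidHom_lt_one hθ' hadj hσ
    ⟨hq₀.1.sub hq₁.1, hq₀.2.1.sub hq₁.2.1, hq₀.2.2.1.sub hq₁.2.2.1, hq₀.2.2.2.sub hq₁.2.2.2⟩
    hdist.1 hdist.2
  rw [sub_eq_zero.mp hsub]

/-- Let `K = ℚ(√n)` with `n > 1` squarefree, with its two real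
embeddings `σ₁ ≠ σ₂`.  The Galois-twist map `Φ : q ↦ (σ₁ q, σ₂ q)` (applied
coordinatewise), restricted to the quaternions over `K` with integral
coordinates, is an injective additive homomorphism with discrete image in
`ℍ × ℍ`. -/
theorem order_galois_twist_discrete_embedding
    (n : ℕ) (hn : 1 < n) (hsq : Squarefree n)
    (K : Type) [Field K] [Algebra ℚ K]
    (θ : K) (hθ : θ ^ 2 = (n : K)) (hadj : Algebra.adjoin ℚ {θ} = ⊤)
    (σ₁ σ₂ : K →+* ℝ) (hσ : σ₁ ≠ σ₂) :
    let O : Set (Quaternion K) :=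
      {q | IsIntegral ℤ q.re ∧ IsIntegral ℤ q.imI ∧
        IsIntegral ℤ q.imJ ∧ IsIntegral ℤ q.imK}
    let Φ : Quaternion K → ℍ × ℍ := fun q =>
      ((⟨σ₁ q.re, σ₁ q.imI, σ₁ q.imJ, σ₁ q.imK⟩ : ℍ),
       (⟨σ₂ q.re, σ₂ q.imI, σ₂ q.imJ, σ₂ q.imK⟩ : ℍ))
    (∀ p q : Quaternion K, Φ (p + q) = Φ p + Φ q) ∧
    Set.InjOn Φ O ∧
    (∀ x ∈ Φ '' O, ∃ ε > 0, ∀ y ∈ Φ '' O, dist x y < ε → y = x) :=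
  order_galois_twist_discrete_embedding_general n K θ hθ hadj σ₁ σ₂ hσ
end
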